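/- Let X₊, X₋ be bounded nonnegative self-adjoint operators on L²(ℝ³) of the form X₊ = V₊^{1/2}(−Δ)^{-1}V₊^{1/2} and X₋ = V₋^{1/2}(−Δ)^{-1}V₋^{1/2}, where V₊, V₋ ≥ 0 have disjoint supports, and let J be the multiplication operator by sgn(V) where V = V₊ − V₋, X = |V|^{1/2}(−Δ)^{-1}|V|^{1/2}. Then for every φ ∈ L²(ℝ³): √2 ‖φ‖ · ‖(J + X)φ‖ ≥ ⟨φ, (X₊ + 1 − X₋)φ⟩. -/

import Mathlib

open MeasureTheory
noncomputable section

abbrev E3 := EuclideanSpace ℝ (Fin 3)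
abbrev L2 := MeasureTheory.Lp ℂ 2 (volume : Measure E3)

/-- The Green's function of `-Δ` on `ℝ³`: kernel of `(-Δ)⁻¹`. -/
def green (x y : E3) : ℝ := 1 / (4 * Real.pi * ‖x - y‖)

/-!
Let `P` be the indicator of `{V ≥ 0}` and split `φ = f + g` with `f = Pφ = (φ + Jφ)/2` and
`g = (1 - P)φ = (φ - Jφ)/2`, so that `Jφ = f - g`. Since `V₊^{1/2} = P |V|^{1/2}` and
`V₋^{1/2} = (1 - P) |V|^{1/2}`, one has `⟪φ, X₊φ⟫ = ⟪f, Xf⟫` and `⟪φ, X₋φ⟫ = ⟪g, Xg⟫`. As `X` is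
symmetric, the cross terms of `Re ⟪f - g, X (f + g)⟫` cancel, hence
`Re ⟪φ, (X₊ + 1 - X₋)φ⟫ = Re ⟪Jφ, (J + X)φ⟫ ≤ ‖φ‖ ‖(J + X)φ‖`.

The analytic point is the symmetry of `X`, which is only known through a Bochner integral that
is `0` wherever the integrand fails to be integrable. If `|V|^{1/2}` is not a.e. measurable,
this forces `X = 0`. Otherwise, since `1/|x|` is locally integrable on `ℝ³`, the boundedness of
`X` applied to truncations of `|ψ|` and monotone convergence give, with `W = |V|^{1/2}`,
`∫∫ |φ(x)| W(x) G(x,y) W(y) |ψ(y)| ≤ ‖X‖ ‖φ‖ ‖ψ‖`, and Fubini with the symmetric kernel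
yields `⟪Xφ, ψ⟫ = ⟪φ, Xψ⟫`.
-/

open Metric Set ENNReal ComplexConjugate

lemma green_nonneg (x y : E3) : 0 ≤ green x y := by
  unfold green; positivity

lemma green_ne_zero {x y : E3} (h : y ≠ x) : green x y ≠ 0 := by
  have := Real.pi_pos
  have := norm_pos_iff.mpr (sub_ne_zero.mpr h.symm)
  unfold green; positivity

lemma green_comm (x y : E3) : green x y = green y x := by
  rw [green, green, norm_sub_rev]

lemma measurable_green : Measurable fun p : E3 × E3 => green p.1 p.2 := by
  unfold green; fun_prop

lemma measurable_green_right (x : E3) : Measurable (green x) := by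
  unfold green; fun_prop

lemma locallyIntegrable_green (x : E3) : LocallyIntegrable (green x) := by
  have h0 : LocallyIntegrable (green 0) := by
    refine locallyIntegrable_of_norm_le_rpow (C := (4 * Real.pi)⁻¹) (α := 1) (by simp) (by simp)
      (ae_of_all _ fun z => ?_) (measurable_green_right 0).aestronglyMeasurable
    simp [green, Real.rpow_neg_one, abs_of_pos Real.pi_pos, mul_comm]
  have hx : green x = green 0 ∘ Homeomorph.subRight x := by
    ext y; simp [green]
  rw [hx]
  exact (locallyIntegrable_map_homeomorph (Homeomorph.subRight x)).1
    (by rwa [Homeomorph.coe_subRight, map_sub_right_eq_self])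

lemma integrableOn_green_mul {x : E3} {v : E3 → ℝ} {A : Set E3} {R N : ℝ}
    (hA : MeasurableSet A) (hAR : A ⊆ ball 0 R) (hv : Measurable v) (hvN : ∀ y ∈ A, ‖v y‖ ≤ N) :
    IntegrableOn (fun y => green x y * v y) A := by
  have hg : IntegrableOn (green x) A :=
    ((locallyIntegrable_green x).integrableOn_isCompact (isCompact_closedBall 0 R)).mono_set
      (hAR.trans ball_subset_closedBall)
  refine hg.mul_bdd (c := N) hv.aestronglyMeasurable ?_
  filter_upwards [ae_restrict_mem hA] with y hy
  exact hvN y hy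

section Kernel

variable {W : E3 → ℝ} {u v : E3 → ℂ}

lemma measurable_kernel_enorm (hW : Measurable W) (hu : Measurable u) (hv : Measurable v) :
    Measurable fun p : E3 × E3 =>
      ‖u p.1‖ₑ * ENNReal.ofReal (W p.1 * green p.1 p.2 * W p.2) * ‖v p.2‖ₑ :=
  ((hu.enorm.comp measurable_fst).mul (((hW.comp measurable_fst).mul measurable_green).mul
    (hW.comp measurable_snd)).ennreal_ofReal).mul (hv.enorm.comp measurable_snd)

lemma setLIntegral_kernel_slice (hW0 : ∀ x, 0 ≤ W x) {A : Set E3} {x : E3}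
    (hint : IntegrableOn (fun y => green x y * (W y * ‖v y‖)) A) :
    ∫⁻ y in A, ‖u x‖ₑ * ENNReal.ofReal (W x * green x y * W y) * ‖v y‖ₑ =
      ENNReal.ofReal (‖u x‖ * W x * ∫ y in A, green x y * (W y * ‖v y‖)) := by
  have huW : 0 ≤ ‖u x‖ * W x := mul_nonneg (norm_nonneg _) (hW0 x)
  have hslice : ∀ y, 0 ≤ green x y * (W y * ‖v y‖) := fun y =>
    mul_nonneg (green_nonneg x y) (mul_nonneg (hW0 y) (norm_nonneg _))
  calc ∫⁻ y in A, ‖u x‖ₑ * ENNReal.ofReal (W x * green x y * W y) * ‖v y‖ₑ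
      = ∫⁻ y in A, ENNReal.ofReal (‖u x‖ * W x) *
          ENNReal.ofReal (green x y * (W y * ‖v y‖)) := by
        refine lintegral_congr fun y => ?_
        rw [← ofReal_norm, ← ofReal_norm, ← ENNReal.ofReal_mul (norm_nonneg _),
          ← ENNReal.ofReal_mul (mul_nonneg (norm_nonneg _)
            (mul_nonneg (mul_nonneg (hW0 x) (green_nonneg x y)) (hW0 y))),
          ← ENNReal.ofReal_mul huW]
        ring_nf
    _ = _ := by
        rw [lintegral_const_mul' _ _ ofReal_ne_top,
          ← ofReal_integral_eq_lintegral_ofReal hint (ae_of_all _ hslice), ← ENNReal.ofReal_mul huW]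

end Kernel

section Lp

variable {α : Type*} [MeasurableSpace α] {μ : Measure α} {p : ℝ≥0∞}

lemma MeasureTheory.Lp.exists_indicator_norm (φ : Lp ℂ p μ) {A : Set α} (hA : MeasurableSet A) :
    ∃ b : Lp ℂ p μ, ‖b‖ ≤ ‖φ‖ ∧ b =ᵐ[μ] A.indicator fun y => (‖φ y‖ : ℂ) := by
  have hle : ∀ y, ‖A.indicator (fun y => (‖φ y‖ : ℂ)) y‖ ≤ ‖φ y‖ := fun y =>
    (norm_indicator_le_norm_self _ y).trans (by simp)
  have hm : MemLp (A.indicator fun y => (‖φ y‖ : ℂ)) p μ :=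
    (Lp.memLp φ).of_le
      ((Complex.continuous_ofReal.comp_aestronglyMeasurable
        (Lp.aestronglyMeasurable φ).norm).indicator hA) (ae_of_all _ hle)
  refine ⟨hm.toLp _, Lp.norm_le_norm_of_ae_le ?_, hm.coeFn_toLp⟩
  filter_upwards [hm.coeFn_toLp] with y hy
  exact hy ▸ hle y

lemma MeasureTheory.Lp.norm_eq_of_ae_norm_eq {E : Type*} [NormedAddCommGroup E]
    {f g : Lp E p μ} (h : ∀ᵐ x ∂μ, ‖f x‖ = ‖g x‖) : ‖f‖ = ‖g‖ :=
  le_antisymm (Lp.norm_le_norm_of_ae_le (h.mono fun _ => le_of_eq))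
    (Lp.norm_le_norm_of_ae_le (h.mono fun _ => ge_of_eq))

lemma aemeasurable_of_forall_aestronglyMeasurable_mul [SigmaFinite μ] {W : α → ℝ}
    (h : ∀ φ : Lp ℂ p μ, AEStronglyMeasurable (fun y => (W y : ℂ) * φ y) μ) :
    AEMeasurable W μ := by
  rw [← Measure.restrict_univ (μ := μ), ← iUnion_spanningSets μ, aemeasurable_iUnion_iff]
  intro n
  let φ : Lp ℂ p μ := indicatorConstLp p (measurableSet_spanningSets μ n)
    (measure_spanningSets_lt_top μ n).ne (1 : ℂ)
  have hφ : ⇑φ =ᵐ[μ] (spanningSets μ n).indicator fun _ => (1 : ℂ) := indicatorConstLp_coeFn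
  refine (Complex.measurable_re.comp_aemeasurable (h φ).aemeasurable).restrict.congr ?_
  filter_upwards [ae_restrict_mem (measurableSet_spanningSets μ n), ae_restrict_of_ae hφ]
    with y hy hφy
  simp [hφy, hy]

end Lp

def IsBirmanSchwinger (W : E3 → ℝ) (T : L2 →L[ℂ] L2) : Prop :=
  ∀ φ : L2, ∀ᵐ x : E3, T φ x = ∫ y : E3, ((W x * green x y * W y : ℝ) : ℂ) * φ y

namespace IsBirmanSchwinger

variable {W : E3 → ℝ} {T : L2 →L[ℂ] L2}

lemma map_ae_eq (hT : IsBirmanSchwinger W T) (φ : L2) :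
    T φ =ᵐ[volume] fun x => (W x : ℂ) * ∫ y, (green x y : ℂ) * (W y * φ y) := by
  filter_upwards [hT φ] with x hx
  rw [hx, ← integral_const_mul]
  congr 1; ext y; push_cast; ring

lemma congr_ae (hT : IsBirmanSchwinger W T) {W' : E3 → ℝ} (h : W =ᵐ[volume] W') :
    IsBirmanSchwinger W' T := by
  intro φ
  filter_upwards [hT φ, h] with x hx hxW
  rw [hx, ← hxW]
  refine integral_congr_ae ?_
  filter_upwards [h] with y hy
  rw [hy]

lemma map_eq_zero_of_not_aestronglyMeasurable (hT : IsBirmanSchwinger W T) {φ : L2}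
    (hφ : ¬ AEStronglyMeasurable (fun y => (W y : ℂ) * φ y)) : T φ = 0 := by
  refine Lp.eq_zero_iff_ae_eq_zero.mpr ?_
  filter_upwards [hT.map_ae_eq φ] with x hx
  rw [hx, integral_undef, mul_zero, Pi.zero_apply]
  intro hint
  have hinv : Measurable fun y => (green x y : ℂ)⁻¹ :=
    (Complex.measurable_ofReal.comp (measurable_green_right x)).inv
  refine hφ ((hinv.aestronglyMeasurable.mul hint.aestronglyMeasurable).congr ?_)
  filter_upwards [Measure.ae_ne volume x] with y hy
  rw [Pi.mul_apply, inv_mul_cancel_left₀ (Complex.ofReal_ne_zero.mpr (green_ne_zero hy))]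

lemma eq_zero_of_not_aemeasurable (hT : IsBirmanSchwinger W T) (hW : ¬ AEMeasurable W) :
    T = 0 := by
  obtain ⟨φ₀, hφ₀⟩ : ∃ φ₀ : L2, ¬ AEStronglyMeasurable (fun y => (W y : ℂ) * φ₀ y) := by
    by_contra! h
    exact hW (aemeasurable_of_forall_aestronglyMeasurable_mul h)
  ext1 φ
  by_cases hφ : AEStronglyMeasurable (fun y => (W y : ℂ) * φ y)
  · have hsum : ¬ AEStronglyMeasurable (fun y => (W y : ℂ) * (φ₀ + φ) y) := by
      refine fun h => hφ₀ ((h.sub hφ).congr ?_)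
      filter_upwards [Lp.coeFn_add φ₀ φ] with y hy
      simp only [Pi.sub_apply]
      rw [hy, Pi.add_apply]
      ring
    have := hT.map_eq_zero_of_not_aestronglyMeasurable hsum
    rwa [map_add, hT.map_eq_zero_of_not_aestronglyMeasurable hφ₀, zero_add] at this
  · exact hT.map_eq_zero_of_not_aestronglyMeasurable hφ

lemma map_ae_eq_of_ae_eq_indicator (hT : IsBirmanSchwinger W T) {A : Set E3}
    (hA : MeasurableSet A) {b ψ : L2} (hb : b =ᵐ[volume] A.indicator fun y => (‖ψ y‖ : ℂ)) :
    T b =ᵐ[volume] fun x => ((W x * ∫ y in A, green x y * (W y * ‖ψ y‖) : ℝ) : ℂ) := by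
  filter_upwards [hT.map_ae_eq b] with x hx
  rw [hx, Complex.ofReal_mul]
  congr 1
  calc ∫ y, (green x y : ℂ) * (W y * b y)
      = ∫ y, A.indicator (fun y => ((green x y * (W y * ‖ψ y‖) : ℝ) : ℂ)) y := by
        refine integral_congr_ae ?_
        filter_upwards [hb] with y hy
        by_cases hyA : y ∈ A <;> simp [hy, hyA]
    _ = ∫ y in A, ((green x y * (W y * ‖ψ y‖) : ℝ) : ℂ) := integral_indicator hA
    _ = _ := integral_ofReal

lemma setLIntegral_kernel_le (hT : IsBirmanSchwinger W T) (hWm : Measurable W)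
    (hW0 : ∀ x, 0 ≤ W x) (φ ψ : L2) {A : Set E3}
    (hA : MeasurableSet A) {R N : ℝ} (hAR : A ⊆ ball 0 R) (hAN : ∀ y ∈ A, W y * ‖ψ y‖ ≤ N) :
    ∫⁻ p in Prod.snd ⁻¹' A, ‖φ p.1‖ₑ * ENNReal.ofReal (W p.1 * green p.1 p.2 * W p.2) *
      ‖ψ p.2‖ₑ ∂(volume.prod volume) ≤ ENNReal.ofReal (‖φ‖ * (‖T‖ * ‖ψ‖)) := by
  obtain ⟨a, ha, ha_eq⟩ := Lp.exists_indicator_norm φ MeasurableSet.univ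
  obtain ⟨b, hb, hb_eq⟩ := Lp.exists_indicator_norm ψ hA
  set h : E3 → ℝ := fun x => ‖φ x‖ * W x * ∫ y in A, green x y * (W y * ‖ψ y‖)
  -- `W ‖ψ‖` is bounded on the bounded set `A`, so the slice integrals are finite and
  -- `⟪|φ|, T b⟫` computes the double integral.
  have hint : ∀ x, IntegrableOn (fun y => green x y * (W y * ‖ψ y‖)) A := fun x =>
    integrableOn_green_mul hA hAR (hWm.mul (Lp.stronglyMeasurable ψ).measurable.norm)
      fun y hy => (Real.norm_of_nonneg (mul_nonneg (hW0 y) (norm_nonneg _))).trans_le (hAN y hy)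
  have hinner : ∀ᵐ x ∂volume, inner ℂ (a x) (T b x) = (h x : ℂ) := by
    filter_upwards [ha_eq, hT.map_ae_eq_of_ae_eq_indicator hA hb_eq] with x h1 h2
    simp [h1, h2, h]
    ring
  have hh0 : ∀ x, 0 ≤ h x := fun x =>
    mul_nonneg (mul_nonneg (norm_nonneg _) (hW0 x)) (integral_nonneg fun y =>
      mul_nonneg (green_nonneg x y) (mul_nonneg (hW0 y) (norm_nonneg _)))
  have hh_int : Integrable h := by
    simpa using ((L2.integrable_inner (𝕜 := ℂ) a (T b)).congr hinner).re
  calc _ = ∫⁻ x, ENNReal.ofReal (h x) := by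
        rw [← Set.univ_prod, ← Measure.prod_restrict, Measure.restrict_univ,
          lintegral_prod _ (measurable_kernel_enorm hWm (Lp.stronglyMeasurable φ).measurable
            (Lp.stronglyMeasurable ψ).measurable).aemeasurable]
        exact lintegral_congr fun x => setLIntegral_kernel_slice hW0 (hint x)
    _ = ENNReal.ofReal (∫ x, h x) :=
        (ofReal_integral_eq_lintegral_ofReal hh_int (ae_of_all _ hh0)).symm
    _ ≤ ENNReal.ofReal (‖φ‖ * (‖T‖ * ‖ψ‖)) := by
        refine ENNReal.ofReal_le_ofReal ?_
        calc ∫ x, h x = (inner ℂ a (T b)).re := by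
              rw [L2.inner_def, integral_congr_ae hinner, integral_complex_ofReal,
                Complex.ofReal_re]
          _ ≤ ‖a‖ * ‖T b‖ := (Complex.re_le_norm _).trans (norm_inner_le_norm _ _)
          _ ≤ ‖φ‖ * (‖T‖ * ‖ψ‖) := by
              gcongr
              exact (T.le_opNorm b).trans (by gcongr)

lemma lintegral_kernel_le (hT : IsBirmanSchwinger W T) (hWm : Measurable W)
    (hW0 : ∀ x, 0 ≤ W x) (φ ψ : L2) :
    ∫⁻ p, ‖φ p.1‖ₑ * ENNReal.ofReal (W p.1 * green p.1 p.2 * W p.2) * ‖ψ p.2‖ₑ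
      ∂(volume.prod volume) ≤ ENNReal.ofReal (‖φ‖ * (‖T‖ * ‖ψ‖)) := by
  set A : ℕ → Set E3 := fun N => {y | W y * ‖ψ y‖ ≤ N} ∩ ball 0 N
  have hA_mono : Monotone fun N => (Prod.snd : E3 × E3 → E3) ⁻¹' A N := fun N M hNM => by
    have : (N : ℝ) ≤ M := Nat.cast_le.mpr hNM
    exact preimage_mono (inter_subset_inter (fun y hy => le_trans hy this) (ball_subset_ball this))
  have hA_union : ⋃ N, (Prod.snd : E3 × E3 → E3) ⁻¹' A N = univ := by
    refine eq_univ_of_forall fun p => mem_iUnion.mpr ?_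
    obtain ⟨N, hN⟩ := exists_nat_gt (max (W p.2 * ‖ψ p.2‖) ‖p.2‖)
    exact ⟨N, (le_max_left _ _).trans hN.le, mem_ball_zero_iff.mpr ((le_max_right _ _).trans_lt hN)⟩
  calc _ = ⨆ N, ∫⁻ p in Prod.snd ⁻¹' A N,
        ‖φ p.1‖ₑ * ENNReal.ofReal (W p.1 * green p.1 p.2 * W p.2) * ‖ψ p.2‖ₑ
          ∂(volume.prod volume) := by
        rw [← setLIntegral_iUnion_of_directed _ hA_mono.directed_le, hA_union,
          Measure.restrict_univ]
    _ ≤ _ := iSup_le fun N => hT.setLIntegral_kernel_le hWm hW0 φ ψ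
        ((measurableSet_le (hWm.mul (Lp.stronglyMeasurable ψ).measurable.norm)
          measurable_const).inter measurableSet_ball) inter_subset_right fun y hy => hy.1

lemma isSymmetric_of_measurable (hT : IsBirmanSchwinger W T) (hWm : Measurable W)
    (hW0 : ∀ x, 0 ≤ W x) : (T : L2 →ₗ[ℂ] L2).IsSymmetric := by
  intro φ ψ
  set k : E3 → E3 → ℂ := fun x y => ((W x * green x y * W y : ℝ) : ℂ)
  have hk : ∀ x y, k y x = k x y := fun x y => by simp only [k, green_comm y x]; ring_nf
  set F : E3 → E3 → ℂ := fun x y => conj (φ x) * (k x y * ψ y)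
  have hF : Integrable (Function.uncurry F) (volume.prod volume) := by
    refine ⟨?_, ?_⟩
    · exact ((((Lp.stronglyMeasurable φ).comp_measurable measurable_fst).star).mul
        ((Complex.continuous_ofReal.comp_stronglyMeasurable (((hWm.comp measurable_fst).mul
          measurable_green).mul (hWm.comp measurable_snd)).stronglyMeasurable).mul
          ((Lp.stronglyMeasurable ψ).comp_measurable measurable_snd))).aestronglyMeasurable
    · refine lt_of_le_of_lt (le_of_eq ?_)
        ((hT.lintegral_kernel_le hWm hW0 φ ψ).trans_lt ofReal_lt_top)
      refine lintegral_congr fun p => ?_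
      simp only [Function.uncurry, F, k, enorm_mul, RCLike.enorm_conj]
      rw [← ofReal_norm (x := ((_ : ℝ) : ℂ)), Complex.norm_real, Real.norm_of_nonneg
        (mul_nonneg (mul_nonneg (hW0 _) (green_nonneg _ _)) (hW0 _))]
      ring
  have hφψ : inner ℂ φ (T ψ) = ∫ x, ∫ y, F x y := by
    rw [L2.inner_def]
    refine integral_congr_ae ?_
    filter_upwards [hT ψ] with x hx
    rw [RCLike.inner_apply', hx, ← integral_const_mul]
  have hTφψ : inner ℂ (T φ) ψ = ∫ y, ∫ x, F x y := by
    rw [L2.inner_def]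
    refine integral_congr_ae ?_
    filter_upwards [hT φ] with y hy
    rw [RCLike.inner_apply', hy, ← integral_conj, ← integral_mul_const]
    refine integral_congr_ae (ae_of_all _ fun x => ?_)
    simp only [F, map_mul, ← hk x y, k, Complex.conj_ofReal]
    ring
  rw [ContinuousLinearMap.coe_coe, hφψ, hTφψ, integral_integral_swap hF]

lemma isSymmetric (hT : IsBirmanSchwinger W T) (hW0 : ∀ x, 0 ≤ W x) :
    (T : L2 →ₗ[ℂ] L2).IsSymmetric := by
  by_cases hW : AEMeasurable W
  · have hWW' : W =ᵐ[volume] fun x => max (hW.mk W x) 0 := by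
      filter_upwards [hW.ae_eq_mk] with x hx
      rw [← hx, max_eq_left (hW0 x)]
    exact (hT.congr_ae hWW').isSymmetric_of_measurable (hW.measurable_mk.max measurable_const)
      fun x => le_max_right _ _
  · rw [hT.eq_zero_of_not_aemeasurable hW]
    exact LinearMap.IsSymmetric.zero

lemma inner_map_self_eq (hT : IsBirmanSchwinger W T) {W' : E3 → ℝ} {T' : L2 →L[ℂ] L2}
    (hT' : IsBirmanSchwinger W' T') {f φ : L2} (h : ∀ᵐ y ∂volume, (W y : ℂ) * f y = W' y * φ y) :
    inner ℂ f (T f) = inner ℂ φ (T' φ) := by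
  rw [L2.inner_def, L2.inner_def]
  refine integral_congr_ae ?_
  filter_upwards [hT.map_ae_eq f, hT'.map_ae_eq φ, h] with x h1 h2 h3
  have hI : ∫ y, (green x y : ℂ) * (W y * f y) = ∫ y, (green x y : ℂ) * (W' y * φ y) :=
    integral_congr_ae (by filter_upwards [h] with y hy; rw [hy])
  have h4 := congrArg conj h3
  simp only [map_mul, Complex.conj_ofReal] at h4
  rw [RCLike.inner_apply', RCLike.inner_apply', h1, h2, hI]
  linear_combination (∫ y, (green x y : ℂ) * (W' y * φ y)) * h4

end IsBirmanSchwinger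

lemma LinearMap.IsSymmetric.re_inner_sub_map_add {E : Type*} [NormedAddCommGroup E]
    [InnerProductSpace ℂ E] {T : E →ₗ[ℂ] E} (hT : T.IsSymmetric) (f g : E) :
    (inner ℂ (f - g) (T (f + g))).re = (inner ℂ f (T f)).re - (inner ℂ g (T g)).re := by
  have : (inner ℂ f (T g)).re = (inner ℂ g (T f)).re := by
    rw [← hT f g, ← inner_conj_symm, Complex.conj_re]
  rw [map_add, inner_sub_left, inner_add_right, inner_add_right]
  simp only [Complex.sub_re, Complex.add_re]
  linarith

lemma sqrt_abs_sub_mul_sign {p m : ℝ} (hp : 0 ≤ p) (hm : 0 ≤ m) (h : p = 0 ∨ m = 0) :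
    ((√|p - m| : ℝ) : ℂ) * (2⁻¹ * (1 + if 0 ≤ p - m then 1 else -1)) = (√p : ℝ) ∧
      ((√|p - m| : ℝ) : ℂ) * (2⁻¹ * (1 - if 0 ≤ p - m then 1 else -1)) = (√m : ℝ) := by
  rcases h with rfl | rfl
  · rcases hm.eq_or_lt with rfl | hm'
    · simp
    · simp [not_le.mpr hm', abs_of_pos hm']
      norm_num
  · simp [hp, abs_of_nonneg hp]
    norm_num

lemma ae_sqrt_abs_sub_mul_half_add_sub {Vp Vm : E3 → ℝ} (hVp : ∀ x, 0 ≤ Vp x)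
    (hVm : ∀ x, 0 ≤ Vm x) (hdisj : ∀ x, Vp x = 0 ∨ Vm x = 0) {φ ψ : L2}
    (hψ : ∀ᵐ x ∂volume, ψ x = (if 0 ≤ Vp x - Vm x then (1 : ℂ) else -1) * φ x) :
    ∀ᵐ y ∂volume,
      ((√|Vp y - Vm y| : ℝ) : ℂ) * ((2⁻¹ : ℂ) • (φ + ψ)) y = (√(Vp y) : ℝ) * φ y ∧
      ((√|Vp y - Vm y| : ℝ) : ℂ) * ((2⁻¹ : ℂ) • (φ - ψ)) y = (√(Vm y) : ℝ) * φ y := by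
  filter_upwards [Lp.coeFn_smul (2⁻¹ : ℂ) (φ + ψ), Lp.coeFn_add φ ψ,
    Lp.coeFn_smul (2⁻¹ : ℂ) (φ - ψ), Lp.coeFn_sub φ ψ, hψ] with y h1 h2 h3 h4 h5
  obtain ⟨hp, hm⟩ := sqrt_abs_sub_mul_sign (hVp y) (hVm y) (hdisj y)
  simp only [h1, h3, Pi.smul_apply, h2, h4, Pi.add_apply, Pi.sub_apply, h5, smul_eq_mul]
  exact ⟨by linear_combination φ y * hp, by linear_combination φ y * hm⟩

/-- Birman–Schwinger type estimate: with `V = V₊ - V₋` (disjoint supports, `V± ≥ 0`),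
`J = sgn V`, `X = |V|^{1/2} (-Δ)⁻¹ |V|^{1/2}` and `X± = V±^{1/2} (-Δ)⁻¹ V±^{1/2}`,
for every `φ ∈ L²(ℝ³)` one has `√2 ‖φ‖ ‖(J+X)φ‖ ≥ ⟨φ, (X₊ + 1 - X₋) φ⟩`. -/
theorem stmt1 (Vp Vm : E3 → ℝ)
    (hVp : ∀ x, 0 ≤ Vp x) (hVm : ∀ x, 0 ≤ Vm x)
    (hdisj : ∀ x, Vp x = 0 ∨ Vm x = 0)
    (J X Xp Xm : L2 →L[ℂ] L2)
    (hJ : ∀ φ : L2, ∀ᵐ x : E3, J φ x =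
      (if 0 ≤ Vp x - Vm x then (1 : ℂ) else -1) * φ x)
    (hX : ∀ φ : L2, ∀ᵐ x : E3, X φ x =
      ∫ y : E3, ((Real.sqrt |Vp x - Vm x| * green x y * Real.sqrt |Vp y - Vm y| : ℝ) : ℂ) * φ y)
    (hXp : ∀ φ : L2, ∀ᵐ x : E3, Xp φ x =
      ∫ y : E3, ((Real.sqrt (Vp x) * green x y * Real.sqrt (Vp y) : ℝ) : ℂ) * φ y)
    (hXm : ∀ φ : L2, ∀ᵐ x : E3, Xm φ x =
      ∫ y : E3, ((Real.sqrt (Vm x) * green x y * Real.sqrt (Vm y) : ℝ) : ℂ) * φ y)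
    (φ : L2) :
    (inner ℂ φ ((Xp + 1 - Xm) φ) : ℂ).re ≤ Real.sqrt 2 * ‖φ‖ * ‖(J + X) φ‖ := by
  have hX' : IsBirmanSchwinger (fun x => √|Vp x - Vm x|) X := hX
  have hw := ae_sqrt_abs_sub_mul_half_add_sub hVp hVm hdisj (hJ φ)
  have hcross := (hX'.isSymmetric fun _ => Real.sqrt_nonneg _).re_inner_sub_map_add
    ((2⁻¹ : ℂ) • (φ + J φ)) ((2⁻¹ : ℂ) • (φ - J φ))
  simp only [ContinuousLinearMap.coe_coe, hX'.inner_map_self_eq hXp (hw.mono fun _ => And.left),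
    hX'.inner_map_self_eq hXm (hw.mono fun _ => And.right)] at hcross
  rw [show (2⁻¹ : ℂ) • (φ + J φ) - (2⁻¹ : ℂ) • (φ - J φ) = J φ by module,
    show (2⁻¹ : ℂ) • (φ + J φ) + (2⁻¹ : ℂ) • (φ - J φ) = φ by module] at hcross
  have hJφ : ‖J φ‖ = ‖φ‖ := Lp.norm_eq_of_ae_norm_eq <| by
    filter_upwards [hJ φ] with x hx
    split_ifs at hx <;> simp [hx]
  calc (inner ℂ φ ((Xp + 1 - Xm) φ)).re = (inner ℂ (J φ) ((J + X) φ)).re := by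
        simp only [add_apply, sub_apply, one_apply_eq_self, inner_add_right, inner_sub_right,
          Complex.add_re, Complex.sub_re, hcross, inner_self_eq_norm_sq_to_K, hJφ]
        ring
    _ ≤ ‖J φ‖ * ‖(J + X) φ‖ := (Complex.re_le_norm _).trans (norm_inner_le_norm _ _)
    _ ≤ √2 * ‖φ‖ * ‖(J + X) φ‖ := by
        rw [hJφ, mul_assoc]
        exact le_mul_of_one_le_left (by positivity) (Real.one_le_sqrt.mpr one_le_two)
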